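/- Let γ_1 > γ_2 > 0, ω > 0, P_t > 0, P_tol ≥ 0, and φ_2 > 1. Define P_1 = P_t/2 − P_tol/(2γ_1) and P_2 = P_t/2 + P_tol/(2γ_1), and assume P_1 ≥ 0 and the weak user's rate constraint holds at this point: P_2γ_2 ≥ (φ_2 − 1)(P_1γ_2 + ω). Then: (a) the SIC constraint holds with equality, (P_2 − P_1)·γ_1 = P_tol; and (b) for all Q_1, Q_2 ≥ 0 with Q_1 + Q_2 ≤ P_t, Q_2γ_2 ≥ (φ_2 − 1)(Q_1γ_2 + ω), and (Q_2 − Q_1)·γ_1 ≥ P_tol, the sum throughput satisfies log₂(1 + Q_1γ_1/ω) + log₂(1 + Q_2γ_2/(Q_1γ_2 + ω)) ≤ log₂(1 + P_1γ_1/ω) + log₂(1 + P_2γ_2/(P_1γ_2 + ω)). -/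

import Mathlib

/-!
Successive interference cancellation forces `(Q₂ - Q₁)γ₁ ≥ P_tol`, which together with
`Q₁ + Q₂ ≤ P_t` caps the strong user's power at `P₁`. Writing the sum throughput as
`log₂ ((ω + Q₁γ₁) / (ω + Q₁γ₂)) + log₂ (ω + (Q₁ + Q₂)γ₂) - log₂ ω`, the first term increases
with `Q₁` because `γ₁ > γ₂`, and the second with the total power, so both are maximised by the
allocation `(P₁, P₂)`, which meets the SIC bound with equality and uses all of `P_t`.
-/

open Real

noncomputable def sumRate (γ1 γ2 ω P1 P2 : ℝ) : ℝ :=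
  logb 2 (1 + P1 * γ1 / ω) + logb 2 (1 + P2 * γ2 / (P1 * γ2 + ω))

section

variable {γ1 γ2 ω : ℝ}

theorem le_half_sub_of_sic {Q1 Q2 Pt Ptol : ℝ} (hγ1 : 0 < γ1) (hsum : Q1 + Q2 ≤ Pt)
    (hsic : (Q2 - Q1) * γ1 ≥ Ptol) : Q1 ≤ Pt / 2 - Ptol / (2 * γ1) := by
  have : Ptol / (2 * γ1) ≤ (Q2 - Q1) / 2 := by
    rw [div_le_iff₀ (by positivity)]
    linarith
  linarith

theorem div_le_div_of_gain_le {a b : ℝ} (hω : 0 < ω) (hγ : γ2 ≤ γ1) (ha : 0 < ω + a * γ2)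
    (hb : 0 < ω + b * γ2) (hab : a ≤ b) :
    (ω + a * γ1) / (ω + a * γ2) ≤ (ω + b * γ1) / (ω + b * γ2) := by
  rw [div_le_div_iff₀ ha hb]
  have hdiff : (ω + b * γ1) * (ω + a * γ2) - (ω + a * γ1) * (ω + b * γ2)
      = ω * (b - a) * (γ1 - γ2) := by ring
  have : 0 ≤ ω * (b - a) * (γ1 - γ2) :=
    mul_nonneg (mul_nonneg hω.le (sub_nonneg.2 hab)) (sub_nonneg.2 hγ)
  linarith

theorem sumRate_eq {P1 P2 : ℝ} (hω : 0 < ω) (h1 : 0 < ω + P1 * γ1) (h2 : 0 < ω + P1 * γ2)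
    (h12 : 0 < ω + (P1 + P2) * γ2) :
    sumRate γ1 γ2 ω P1 P2 =
      logb 2 ((ω + P1 * γ1) / (ω + P1 * γ2)) + logb 2 (ω + (P1 + P2) * γ2) - logb 2 ω := by
  have e1 : 1 + P1 * γ1 / ω = (ω + P1 * γ1) / ω := one_add_div hω.ne'
  have e2 : 1 + P2 * γ2 / (P1 * γ2 + ω) = (ω + (P1 + P2) * γ2) / (ω + P1 * γ2) := by
    rw [add_comm (P1 * γ2), one_add_div h2.ne']
    ring
  rw [sumRate, e1, e2, logb_div h1.ne' hω.ne', logb_div h12.ne' h2.ne',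
    logb_div h1.ne' h2.ne']
  ring

theorem sumRate_le_sumRate {Q1 Q2 P1 P2 : ℝ} (hω : 0 < ω) (hγ2 : 0 ≤ γ2) (hγ : γ2 ≤ γ1)
    (hQ1 : 0 ≤ Q1) (hQ2 : 0 ≤ Q2) (hQP1 : Q1 ≤ P1) (hQP : Q1 + Q2 ≤ P1 + P2) :
    sumRate γ1 γ2 ω Q1 Q2 ≤ sumRate γ1 γ2 ω P1 P2 := by
  have hγ1 : 0 ≤ γ1 := hγ2.trans hγ
  have hP1 : 0 ≤ P1 := hQ1.trans hQP1
  have hP : 0 ≤ P1 + P2 := by linarith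
  have hQ : 0 ≤ Q1 + Q2 := by linarith
  rw [sumRate_eq hω (by positivity) (by positivity) (by positivity),
    sumRate_eq hω (by positivity) (by positivity) (by positivity)]
  have hratio : logb 2 ((ω + Q1 * γ1) / (ω + Q1 * γ2)) ≤ logb 2 ((ω + P1 * γ1) / (ω + P1 * γ2)) :=
    logb_le_logb_of_le one_lt_two (by positivity)
      (div_le_div_of_gain_le hω hγ (by positivity) (by positivity) hQP1)
  have htotal : logb 2 (ω + (Q1 + Q2) * γ2) ≤ logb 2 (ω + (P1 + P2) * γ2) :=
    logb_le_logb_of_le one_lt_two (by positivity) (by gcongr)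
  linarith

end

theorem dl_noma_two_user_opt_sic_binding_general
    (γ1 γ2 ω Pt Ptol φ2 : ℝ) (h12 : γ2 < γ1) (h2 : 0 < γ2) (hω : 0 < ω)
    (P1 P2 : ℝ)
    (hP1 : P1 = Pt / 2 - Ptol / (2 * γ1))
    (hP2 : P2 = Pt / 2 + Ptol / (2 * γ1)) :
    (P2 - P1) * γ1 = Ptol ∧
    ∀ Q1 Q2 : ℝ, 0 ≤ Q1 → 0 ≤ Q2 → Q1 + Q2 ≤ Pt →
      Q2 * γ2 ≥ (φ2 - 1) * (Q1 * γ2 + ω) → (Q2 - Q1) * γ1 ≥ Ptol →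
      Real.logb 2 (1 + Q1 * γ1 / ω) + Real.logb 2 (1 + Q2 * γ2 / (Q1 * γ2 + ω))
        ≤ Real.logb 2 (1 + P1 * γ1 / ω) + Real.logb 2 (1 + P2 * γ2 / (P1 * γ2 + ω)) := by
  have hγ1 : 0 < γ1 := h2.trans h12
  refine ⟨by rw [hP1, hP2]; field_simp; ring, fun Q1 Q2 hQ1 hQ2 hQsum _ hQsic => ?_⟩
  have hQP1 : Q1 ≤ P1 := hP1 ▸ le_half_sub_of_sic hγ1 hQsum hQsic
  have hPsum : P1 + P2 = Pt := by rw [hP1, hP2]; ring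
  exact sumRate_le_sumRate hω h2.le h12.le hQ1 hQ2 hQP1 (hPsum ▸ hQsum)

/-- 2-user downlink NOMA, case where the SIC constraint is binding: with
`P1 = Pt/2 - Ptol/(2γ1)` and `P2 = Pt/2 + Ptol/(2γ1)`,
(a) the SIC constraint holds with equality, and (b) this allocation maximizes
the sum throughput among all feasible allocations. -/
theorem dl_noma_two_user_opt_sic_binding
    (γ1 γ2 ω Pt Ptol φ2 : ℝ) (h12 : γ2 < γ1) (h2 : 0 < γ2) (hω : 0 < ω)
    (hPt : 0 < Pt) (hPtol : 0 ≤ Ptol) (hφ : 1 < φ2)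
    (P1 P2 : ℝ)
    (hP1 : P1 = Pt / 2 - Ptol / (2 * γ1))
    (hP2 : P2 = Pt / 2 + Ptol / (2 * γ1))
    (hP1nn : 0 ≤ P1)
    (hrate : P2 * γ2 ≥ (φ2 - 1) * (P1 * γ2 + ω)) :
    (P2 - P1) * γ1 = Ptol ∧
    ∀ Q1 Q2 : ℝ, 0 ≤ Q1 → 0 ≤ Q2 → Q1 + Q2 ≤ Pt →
      Q2 * γ2 ≥ (φ2 - 1) * (Q1 * γ2 + ω) → (Q2 - Q1) * γ1 ≥ Ptol →
      Real.logb 2 (1 + Q1 * γ1 / ω) + Real.logb 2 (1 + Q2 * γ2 / (Q1 * γ2 + ω))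
        ≤ Real.logb 2 (1 + P1 * γ1 / ω) + Real.logb 2 (1 + P2 * γ2 / (P1 * γ2 + ω)) :=
  dl_noma_two_user_opt_sic_binding_general γ1 γ2 ω Pt Ptol φ2 h12 h2 hω P1 P2 hP1 hP2
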